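/- Let γ(s,t) be an arclength-parametrized inextensible flow of partially null curves in E⁴₁ with partially null Frenet frame {T, N, B₁, B₂}, curvatures k₁, k₂ (k₃ = 0), flow ∂γ/∂t = β₁T + β₂N + β₃B₁ + β₄B₂ (so ∂β₁/∂s = β₂k₁), and ψ₁ = ⟨∂N/∂t, B₁⟩. If ψ₁ ≠ 0, then k₁ = (1/ψ₁) ∂²β₄/∂s². -/

import Mathlib

/-!
Formalization of inextensible flows of partially null / pseudo null curves in
Minkowski space-time `E⁴₁` (ℝ⁴ with signature (-,+,+,+)).
-/

noncomputable section

/-- The Minkowski bilinear form on `ℝ⁴` with signature `(-,+,+,+)`. -/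
def mink (v w : Fin 4 → ℝ) : ℝ :=
  -(v 0 * w 0) + v 1 * w 1 + v 2 * w 2 + v 3 * w 3

/-- The Minkowski norm `‖v‖ = √|⟨v,v⟩|`. -/
def mnorm (v : Fin 4 → ℝ) : ℝ := Real.sqrt |mink v v|

/-!
Since `B₁` is null and orthogonal to `T` and `N` while `⟨B₂, B₁⟩ = 1`, pairing the flow
equation with `B₁` gives `β₄ = ⟨∂γ/∂t, B₁⟩`. As `∂B₁/∂s = 0`, differentiating in `s` and
swapping the mixed partials gives `∂β₄/∂s = ⟨∂T/∂t, B₁⟩`, and once more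
`∂²β₄/∂s² = ⟨∂(k₁N)/∂t, B₁⟩ = k₁ ψ₁`, because `⟨N, B₁⟩ = 0`.
-/

section PartialDerivatives

variable {E : Type*} [NormedAddCommGroup E] [NormedSpace ℝ E] {f : ℝ → ℝ → E}

lemma hasDerivAt_partial_fst (hf : Differentiable ℝ (fun p : ℝ × ℝ => f p.1 p.2)) (s t : ℝ) :
    HasDerivAt (fun x => f x t) (fderiv ℝ (fun p : ℝ × ℝ => f p.1 p.2) (s, t) (1, 0)) s := by
  exact (hf (s, t)).hasFDerivAt.comp_hasDerivAt s
    ((hasDerivAt_id s).prodMk (hasDerivAt_const s t))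

lemma hasDerivAt_partial_snd (hf : Differentiable ℝ (fun p : ℝ × ℝ => f p.1 p.2)) (s t : ℝ) :
    HasDerivAt (fun y => f s y) (fderiv ℝ (fun p : ℝ × ℝ => f p.1 p.2) (s, t) (0, 1)) t := by
  exact (hf (s, t)).hasFDerivAt.comp_hasDerivAt t
    ((hasDerivAt_const t s).prodMk (hasDerivAt_id t))

/-- Schwarz's theorem: `∂ₛ ∂ₜ f = ∂ₜ ∂ₛ f` for `f` of class `C²`. -/
lemma hasDerivAt_partial_snd_comm (hf : ContDiff ℝ 2 (fun p : ℝ × ℝ => f p.1 p.2)) (s t : ℝ) :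
    HasDerivAt (fun x => deriv (fun y => f x y) t)
      (deriv (fun y => deriv (fun x => f x y) s) t) s := by
  set F : ℝ × ℝ → E := fun p => f p.1 p.2
  have hF : Differentiable ℝ F := hf.differentiable two_ne_zero
  have hF' : HasFDerivAt (fderiv ℝ F) (fderiv ℝ (fderiv ℝ F) (s, t)) (s, t) :=
    ((hf.fderiv_right one_add_one_eq_two.le).differentiable one_ne_zero (s, t)).hasFDerivAt
  have hsymm := (hf.contDiffAt (x := (s, t))).isSymmSndFDerivAt (by simp) (0, 1) (1, 0)
  have hx : HasDerivAt (fun x : ℝ => (x, t)) (1, 0) s :=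
    (hasDerivAt_id s).prodMk (hasDerivAt_const s t)
  have hy : HasDerivAt (fun y : ℝ => (s, y)) (0, 1) t :=
    (hasDerivAt_const t s).prodMk (hasDerivAt_id t)
  have hsnd_fst : HasDerivAt (fun x => fderiv ℝ F (x, t) (0, 1))
      (fderiv ℝ (fderiv ℝ F) (s, t) (1, 0) (0, 1)) s := by
    simpa [Function.comp_def] using
      ((ContinuousLinearMap.apply ℝ E (0, 1)).hasFDerivAt.comp (s, t) hF').comp_hasDerivAt s hx
  have hfst_snd : HasDerivAt (fun y => fderiv ℝ F (s, y) (1, 0))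
      (fderiv ℝ (fderiv ℝ F) (s, t) (0, 1) (1, 0)) t := by
    simpa [Function.comp_def] using
      ((ContinuousLinearMap.apply ℝ E (1, 0)).hasFDerivAt.comp (s, t) hF').comp_hasDerivAt t hy
  have hsnd : (fun x => deriv (fun y => f x y) t) = fun x => fderiv ℝ F (x, t) (0, 1) :=
    funext fun x => (hasDerivAt_partial_snd hF x t).deriv
  have hfst : (fun y => deriv (fun x => f x y) s) = fun y => fderiv ℝ F (s, y) (1, 0) :=
    funext fun y => (hasDerivAt_partial_fst hF s y).deriv
  rw [hsnd, hfst, hfst_snd.deriv, hsymm]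
  exact hsnd_fst

end PartialDerivatives

section Minkowski

lemma mink_comm (v w : Fin 4 → ℝ) : mink v w = mink w v := by
  simp only [mink]; ring

lemma mink_add_left (u v w : Fin 4 → ℝ) : mink (u + v) w = mink u w + mink v w := by
  simp only [mink, Pi.add_apply]; ring

lemma mink_smul_left (a : ℝ) (v w : Fin 4 → ℝ) : mink (a • v) w = a * mink v w := by
  simp only [mink, Pi.smul_apply, smul_eq_mul]; ring

lemma mink_zero_right (v : Fin 4 → ℝ) : mink v 0 = 0 := by
  simp only [mink, Pi.zero_apply]; ring

lemma HasDerivAt.mink {f g : ℝ → Fin 4 → ℝ} {f' g' : Fin 4 → ℝ} {x : ℝ}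
    (hf : HasDerivAt f f' x) (hg : HasDerivAt g g' x) :
    HasDerivAt (fun y => _root_.mink (f y) (g y))
      (_root_.mink f' (g x) + _root_.mink (f x) g') x := by
  have hfi := hasDerivAt_pi.1 hf
  have hgi := hasDerivAt_pi.1 hg
  exact ((((hfi 0).mul (hgi 0)).neg.add ((hfi 1).mul (hgi 1))).add
    ((hfi 2).mul (hgi 2))).add ((hfi 3).mul (hgi 3))
    |>.congr_deriv (by simp only [_root_.mink]; ring)

lemma deriv_mink_of_hasDerivAt_zero {f g : ℝ → Fin 4 → ℝ} {x : ℝ}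
    (hf : DifferentiableAt ℝ f x) (hg : HasDerivAt g 0 x) :
    deriv (fun y => mink (f y) (g y)) x = mink (deriv f x) (g x) := by
  rw [(hf.hasDerivAt.mink hg).deriv, mink_zero_right, add_zero]

lemma mink_frame_combination_B₁ {T N B₁ B₂ : Fin 4 → ℝ} (hTB₁ : mink T B₁ = 0)
    (hNB₁ : mink N B₁ = 0) (hB₁B₁ : mink B₁ B₁ = 0) (hB₁B₂ : mink B₁ B₂ = 1) (a b c d : ℝ) :
    mink (a • T + b • N + c • B₁ + d • B₂) B₁ = d := by
  simp only [mink_add_left, mink_smul_left, hTB₁, hNB₁, hB₁B₁, mink_comm B₂, hB₁B₂]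
  ring

end Minkowski

theorem k1_formula_partially_null_general
    (γ T N B₁ B₂ : ℝ → ℝ → (Fin 4 → ℝ))
    (k₁ β₁ β₂ β₃ β₄ : ℝ → ℝ → ℝ)
    (ψ₁ : ℝ → ℝ → ℝ)
    (hγsmooth : ContDiff ℝ (⊤ : ℕ∞) (fun p : ℝ × ℝ => γ p.1 p.2))
    (hTsmooth : ContDiff ℝ (⊤ : ℕ∞) (fun p : ℝ × ℝ => T p.1 p.2))
    (hNsmooth : ContDiff ℝ (⊤ : ℕ∞) (fun p : ℝ × ℝ => N p.1 p.2))
    (hB₁smooth : ContDiff ℝ (⊤ : ℕ∞) (fun p : ℝ × ℝ => B₁ p.1 p.2))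
    (hk₁smooth : ContDiff ℝ (⊤ : ℕ∞) (fun p : ℝ × ℝ => k₁ p.1 p.2))
    (hB₁B₁ : ∀ s t : ℝ, mink (B₁ s t) (B₁ s t) = 0)
    (hB₁B₂ : ∀ s t : ℝ, mink (B₁ s t) (B₂ s t) = 1)
    (hTB₁ : ∀ s t : ℝ, mink (T s t) (B₁ s t) = 0)
    (hNB₁ : ∀ s t : ℝ, mink (N s t) (B₁ s t) = 0)
    -- arclength parametrization and Frenet equations (k₃ = 0)
    (hT : ∀ s t : ℝ, T s t = deriv (fun x => γ x t) s)
    (hfr₁ : ∀ s t : ℝ, deriv (fun x => T x t) s = k₁ s t • N s t)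
    (hfr₃ : ∀ s t : ℝ, deriv (fun x => B₁ x t) s = 0)
    (hflow : ∀ s t : ℝ, deriv (fun x => γ s x) t =
      β₁ s t • T s t + β₂ s t • N s t + β₃ s t • B₁ s t + β₄ s t • B₂ s t)
    (hψ₁ : ∀ s t : ℝ, ψ₁ s t = mink (deriv (fun x => N s x) t) (B₁ s t)) :
    ∀ s t : ℝ, ψ₁ s t ≠ 0 →
      k₁ s t = (1 / ψ₁ s t) * deriv (fun x => deriv (fun y => β₄ y t) x) s := by
  intro s t hψ
  have h2 : (2 : WithTop ℕ∞) ≤ (⊤ : ℕ∞) := WithTop.coe_le_coe.2 le_top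
  have hB₁_s : ∀ x, HasDerivAt (fun y => B₁ y t) 0 x := fun x => by
    simpa only [hfr₃] using
      (hasDerivAt_partial_fst (hB₁smooth.differentiable (by simp)) x t).differentiableAt.hasDerivAt
  have hβ₄ : (fun x => β₄ x t) = fun x => mink (deriv (fun y => γ x y) t) (B₁ x t) :=
    funext fun x => by
      rw [hflow, mink_frame_combination_B₁ (hTB₁ x t) (hNB₁ x t) (hB₁B₁ x t) (hB₁B₂ x t)]
  have hβ₄_s : (fun x => deriv (fun y => β₄ y t) x)
      = fun x => mink (deriv (fun y => T x y) t) (B₁ x t) :=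
    funext fun x => by
      have hγ_ts := hasDerivAt_partial_snd_comm (hγsmooth.of_le h2) x t
      rw [hβ₄, deriv_mink_of_hasDerivAt_zero hγ_ts.differentiableAt (hB₁_s x), hγ_ts.deriv]
      simp only [← hT]
  have hT_ts := hasDerivAt_partial_snd_comm (hTsmooth.of_le h2) s t
  have hk₁N : deriv (fun y => k₁ s y • N s y) t
      = k₁ s t • deriv (fun y => N s y) t + deriv (fun y => k₁ s y) t • N s t :=
    deriv_smul (hasDerivAt_partial_snd (hk₁smooth.differentiable (by simp)) s t).differentiableAt
      (hasDerivAt_partial_snd (hNsmooth.differentiable (by simp)) s t).differentiableAt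
  have hβ₄_ss : deriv (fun x => deriv (fun y => β₄ y t) x) s = k₁ s t * ψ₁ s t := by
    rw [hβ₄_s, deriv_mink_of_hasDerivAt_zero hT_ts.differentiableAt (hB₁_s s), hT_ts.deriv]
    simp only [hfr₁, hk₁N, mink_add_left, mink_smul_left, hNB₁, hψ₁]
    ring
  rw [hβ₄_ss]
  field_simp

theorem k1_formula_partially_null
    (γ T N B₁ B₂ : ℝ → ℝ → (Fin 4 → ℝ))
    (k₁ k₂ β₁ β₂ β₃ β₄ : ℝ → ℝ → ℝ)
    (ψ₁ : ℝ → ℝ → ℝ)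
    (hγsmooth : ContDiff ℝ (⊤ : ℕ∞) (fun p : ℝ × ℝ => γ p.1 p.2))
    (hTsmooth : ContDiff ℝ (⊤ : ℕ∞) (fun p : ℝ × ℝ => T p.1 p.2))
    (hNsmooth : ContDiff ℝ (⊤ : ℕ∞) (fun p : ℝ × ℝ => N p.1 p.2))
    (hB₁smooth : ContDiff ℝ (⊤ : ℕ∞) (fun p : ℝ × ℝ => B₁ p.1 p.2))
    (hB₂smooth : ContDiff ℝ (⊤ : ℕ∞) (fun p : ℝ × ℝ => B₂ p.1 p.2))
    (hk₁smooth : ContDiff ℝ (⊤ : ℕ∞) (fun p : ℝ × ℝ => k₁ p.1 p.2))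
    (hk₂smooth : ContDiff ℝ (⊤ : ℕ∞) (fun p : ℝ × ℝ => k₂ p.1 p.2))
    (hβ₁smooth : ContDiff ℝ (⊤ : ℕ∞) (fun p : ℝ × ℝ => β₁ p.1 p.2))
    (hβ₂smooth : ContDiff ℝ (⊤ : ℕ∞) (fun p : ℝ × ℝ => β₂ p.1 p.2))
    (hβ₃smooth : ContDiff ℝ (⊤ : ℕ∞) (fun p : ℝ × ℝ => β₃ p.1 p.2))
    (hβ₄smooth : ContDiff ℝ (⊤ : ℕ∞) (fun p : ℝ × ℝ => β₄ p.1 p.2))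
    (hTT : ∀ s t : ℝ, mink (T s t) (T s t) = 1)
    (hNN : ∀ s t : ℝ, mink (N s t) (N s t) = 1)
    (hB₁B₁ : ∀ s t : ℝ, mink (B₁ s t) (B₁ s t) = 0)
    (hB₂B₂ : ∀ s t : ℝ, mink (B₂ s t) (B₂ s t) = 0)
    (hB₁B₂ : ∀ s t : ℝ, mink (B₁ s t) (B₂ s t) = 1)
    (hTN : ∀ s t : ℝ, mink (T s t) (N s t) = 0)
    (hTB₁ : ∀ s t : ℝ, mink (T s t) (B₁ s t) = 0)
    (hTB₂ : ∀ s t : ℝ, mink (T s t) (B₂ s t) = 0)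
    (hNB₁ : ∀ s t : ℝ, mink (N s t) (B₁ s t) = 0)
    (hNB₂ : ∀ s t : ℝ, mink (N s t) (B₂ s t) = 0)
    -- arclength parametrization and Frenet equations (k₃ = 0)
    (hT : ∀ s t : ℝ, T s t = deriv (fun x => γ x t) s)
    (hunit : ∀ s t : ℝ, mnorm (deriv (fun x => γ x t) s) = 1)
    (hfr₁ : ∀ s t : ℝ, deriv (fun x => T x t) s = k₁ s t • N s t)
    (hfr₂ : ∀ s t : ℝ, deriv (fun x => N x t) s = -(k₁ s t) • T s t + k₂ s t • B₁ s t)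
    (hfr₃ : ∀ s t : ℝ, deriv (fun x => B₁ x t) s = 0)
    (hfr₄ : ∀ s t : ℝ, deriv (fun x => B₂ x t) s = -(k₂ s t) • N s t)
    (hflow : ∀ s t : ℝ, deriv (fun x => γ s x) t =
      β₁ s t • T s t + β₂ s t • N s t + β₃ s t • B₁ s t + β₄ s t • B₂ s t)
    -- inextensibility: ∂β₁/∂s = β₂k₁
    (hinext : ∀ s t : ℝ, deriv (fun x => β₁ x t) s = β₂ s t * k₁ s t)
    (hψ₁ : ∀ s t : ℝ, ψ₁ s t = mink (deriv (fun x => N s x) t) (B₁ s t)) :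
    ∀ s t : ℝ, ψ₁ s t ≠ 0 →
      k₁ s t = (1 / ψ₁ s t) * deriv (fun x => deriv (fun y => β₄ y t) x) s :=
  k1_formula_partially_null_general γ T N B₁ B₂ k₁ β₁ β₂ β₃ β₄ ψ₁ hγsmooth hTsmooth hNsmooth
    hB₁smooth hk₁smooth hB₁B₁ hB₁B₂ hTB₁ hNB₁ hT hfr₁ hfr₃ hflow hψ₁
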